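/- Let d ≥ 1 be an integer and suppose ε* ∈ (0,1) satisfies (dε*)^{1/(1-ε*) + d} = (1 + dε*)^d. Then for all ε ∈ (ε*, 1), the quantity (k+d)·log₂(1 - 1/(1+dε)) - k·log₂(1/(1+dε)) is strictly positive, where k = 1/(1-ε); consequently max over δ ∈ [0,1] of R(δ) is strictly greater than max over δ ∈ [0, 1/(1+dε)] of R(δ), where R(δ) = h_b(δ)/(dδ + k). -/

import Mathlib

/-- Binary entropy function (base 2), with the convention `0 * log 0 = 0`. -/
noncomputable def binEnt (p : ℝ) : ℝ :=
  -p * Real.logb 2 p - (1 - p) * Real.logb 2 (1 - p)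

lemma binEnt_eq (p : ℝ) :
    binEnt p = (Real.negMulLog p + Real.negMulLog (1 - p)) / Real.log 2 := by
  simp only [binEnt, Real.negMulLog, Real.logb]
  ring

set_option maxHeartbeats 1000000 in
theorem ub_below_nc_above_eps_star (d : ℕ) (hd : 1 ≤ d)
    (εs : ℝ) (hεs : εs ∈ Set.Ioo (0:ℝ) 1)
    (hstar : (d * εs) ^ (1 / (1 - εs) + d) = (1 + d * εs) ^ (d : ℝ))
    (ε : ℝ) (hε : εs < ε) (hε' : ε < 1) (k : ℝ) (hk : k = 1 / (1 - ε)) :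
    0 < (k + d) * Real.logb 2 (1 - 1 / (1 + d * ε)) - k * Real.logb 2 (1 / (1 + d * ε)) ∧
    sSup ((fun δ : ℝ => binEnt δ / (d * δ + k)) '' Set.Icc (0:ℝ) (1 / (1 + d * ε))) <
      sSup ((fun δ : ℝ => binEnt δ / (d * δ + k)) '' Set.Icc (0:ℝ) 1) := by
  obtain ⟨hεs0, hεs1⟩ := hεs
  have hd0 : (0:ℝ) < d := by exact_mod_cast Nat.lt_of_lt_of_le Nat.zero_lt_one hd
  have hd1 : (1:ℝ) ≤ d := by exact_mod_cast hd
  have hε0 : 0 < ε := lt_trans hεs0 hε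
  have h1ε : 0 < 1 - ε := by linarith
  have h1εs : 0 < 1 - εs := by linarith
  have hk0 : 0 < k := by rw [hk]; positivity
  have hks : 1 / (1 - εs) < k := by
    rw [hk]
    apply one_div_lt_one_div_of_lt h1ε
    linarith
  set c : ℝ := 1 / (1 - εs) + d with hc
  have hc0 : 0 < c := by positivity
  have hcd : (d:ℝ) ≤ c := by
    have : 0 < 1 / (1 - εs) := by positivity
    simp only [hc]; linarith
  have hckd : c < k + d := by simp only [hc]; linarith
  -- d * εs > 1
  have hdεs0 : 0 < d * εs := by positivity
  have hdεs : 1 < d * εs := by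
    by_contra h
    push_neg at h
    have h1 : (d * εs) ^ c ≤ 1 := Real.rpow_le_one hdεs0.le h hc0.le
    have h2 : 1 < (1 + d * εs) ^ (d:ℝ) := by
      rw [Real.one_lt_rpow_iff_of_pos (by linarith)]
      left; constructor <;> [linarith; positivity]
    rw [hstar] at h1
    linarith
  have hdε : 1 < d * ε := by
    calc (1:ℝ) < d * εs := hdεs
    _ < d * ε := by exact mul_lt_mul_of_pos_left hε hd0
  have hdε0 : 0 < d * ε := by positivity
  have h1dε : (0:ℝ) < 1 + d * ε := by linarith
  have h1dεs : (0:ℝ) < 1 + d * εs := by linarith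
  -- key rpow inequality
  have hratio : (1 + d * ε) / (1 + d * εs) < ε / εs := by
    rw [div_lt_div_iff₀ h1dεs hεs0]
    nlinarith
  have hεεs1 : 1 ≤ ε / εs := by
    rw [le_div_iff₀ hεs0]; linarith
  have hmain : (1 + d * ε) ^ (d:ℝ) < (d * ε) ^ (k + d) := by
    have e1 : (1 + d * ε) ^ (d:ℝ)
        = (1 + d * εs) ^ (d:ℝ) * ((1 + d * ε) / (1 + d * εs)) ^ (d:ℝ) := by
      rw [← Real.mul_rpow h1dεs.le (by positivity)]
      rw [mul_div_cancel₀ _ (ne_of_gt h1dεs)]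
    have e2 : ((1 + d * ε) / (1 + d * εs)) ^ (d:ℝ) < (ε / εs) ^ (d:ℝ) :=
      Real.rpow_lt_rpow (by positivity) hratio hd0
    have e3 : (ε / εs) ^ (d:ℝ) ≤ (ε / εs) ^ c :=
      Real.rpow_le_rpow_of_exponent_le hεεs1 hcd
    have e4 : (1 + d * εs) ^ (d:ℝ) * (ε / εs) ^ c = (d * ε) ^ c := by
      rw [← hstar, ← Real.mul_rpow hdεs0.le (by positivity)]
      congr 1
      field_simp
    have e5 : (d * ε) ^ c < (d * ε) ^ (k + d) :=
      Real.rpow_lt_rpow_of_exponent_lt hdε hckd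
    calc (1 + d * ε) ^ (d:ℝ)
        = (1 + d * εs) ^ (d:ℝ) * ((1 + d * ε) / (1 + d * εs)) ^ (d:ℝ) := e1
      _ < (1 + d * εs) ^ (d:ℝ) * (ε / εs) ^ (d:ℝ) :=
          mul_lt_mul_of_pos_left e2 (Real.rpow_pos_of_pos h1dεs _)
      _ ≤ (1 + d * εs) ^ (d:ℝ) * (ε / εs) ^ c :=
          mul_le_mul_of_nonneg_left e3 (Real.rpow_pos_of_pos h1dεs _).le
      _ = (d * ε) ^ c := e4
      _ < (d * ε) ^ (k + d) := e5
  have hlogmain : (d:ℝ) * Real.log (1 + d * ε) < (k + d) * Real.log (d * ε) := by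
    have := Real.log_lt_log (Real.rpow_pos_of_pos h1dε _) hmain
    rwa [Real.log_rpow h1dε, Real.log_rpow hdε0] at this
  -- the quantity N δ
  set N : ℝ → ℝ := fun δ => (k + d) * Real.logb 2 (1 - δ) - k * Real.logb 2 δ with hN
  set δe : ℝ := 1 / (1 + d * ε) with hδe
  have hδe0 : 0 < δe := by positivity
  have hδehalf : δe < 1/2 := by
    rw [hδe, div_lt_div_iff₀ h1dε (by norm_num)]
    linarith
  have h1δe : 1 - δe = d * ε / (1 + d * ε) := by
    rw [hδe]
    field_simp
    ring
  have hNδe : 0 < N δe := by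
    have l1 : Real.logb 2 (1 - δe) = Real.logb 2 (d * ε) - Real.logb 2 (1 + d * ε) := by
      rw [h1δe, Real.logb_div (ne_of_gt hdε0) (ne_of_gt h1dε)]
    have l2 : Real.logb 2 δe = - Real.logb 2 (1 + d * ε) := by
      rw [hδe, one_div, Real.logb_inv]
    have heq : N δe = ((k + d) * Real.log (d * ε) - d * Real.log (1 + d * ε)) / Real.log 2 := by
      show (k + d) * Real.logb 2 (1 - δe) - k * Real.logb 2 δe = _
      rw [l1, l2]
      simp only [Real.logb]
      ring
    rw [heq]
    exact div_pos (by linarith) (Real.log_pos one_lt_two)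
  refine ⟨hNδe, ?_⟩
  -- N is antitone
  have hNanti : ∀ a b : ℝ, 0 < a → a ≤ b → b < 1 → N b ≤ N a := by
    intro a b ha hab hb1
    have l1 : Real.logb 2 (1 - b) ≤ Real.logb 2 (1 - a) :=
      Real.logb_le_logb_of_le one_lt_two (by linarith) (by linarith)
    have l2 : Real.logb 2 a ≤ Real.logb 2 b :=
      Real.logb_le_logb_of_le one_lt_two ha hab
    have hkd : (0:ℝ) < k + d := by positivity
    simp only [hN]
    nlinarith
  -- find δ1 ∈ (δe, 1/2) with N δ1 > 0
  have h1δe0 : (1:ℝ) - δe ≠ 0 := by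
    rw [h1δe]
    positivity
  have hNcont : ContinuousAt N δe := by
    have c1 : ContinuousAt (fun δ : ℝ => Real.logb 2 (1 - δ)) δe :=
      (Real.continuousAt_logb h1δe0).comp ((continuous_const.sub continuous_id).continuousAt)
    have c2 : ContinuousAt (fun δ : ℝ => Real.logb 2 δ) δe :=
      Real.continuousAt_logb (ne_of_gt hδe0)
    exact (continuousAt_const.mul c1).sub (continuousAt_const.mul c2)
  obtain ⟨δ1, ⟨hδ1N, hδ1half⟩, hδ1gt⟩ :
      ∃ δ1, (0 < N δ1 ∧ δ1 < 1/2) ∧ δe < δ1 := by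
    have h1 : ∀ᶠ x in nhds δe, 0 < N x ∧ x < 1/2 :=
      (hNcont.tendsto.eventually (eventually_gt_nhds hNδe)).and (eventually_lt_nhds hδehalf)
    have h2 : ∀ᶠ x in nhdsWithin δe (Set.Ioi δe), (0 < N x ∧ x < 1/2) ∧ δe < x := by
      refine ((h1.filter_mono nhdsWithin_le_nhds).and ?_)
      exact eventually_mem_nhdsWithin
    exact h2.exists
  -- the function f
  set f : ℝ → ℝ := fun δ : ℝ => binEnt δ / (d * δ + k) with hf
  have hfc : ContinuousOn f (Set.Icc (0:ℝ) 1) := by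
    apply ContinuousOn.div
    · have hcb : Continuous binEnt := by
        have : Continuous fun p : ℝ => (Real.negMulLog p + Real.negMulLog (1 - p)) / Real.log 2 := by
          fun_prop
        simpa only [← binEnt_eq] using this
      exact hcb.continuousOn
    · fun_prop
    · intro x hx
      have := hx.1
      positivity
  have hderiv : ∀ x ∈ Set.Ioo (0:ℝ) δ1, HasDerivAt f (N x / (d * x + k)^2) x := by
    intro x hx
    have hx0 : x ≠ 0 := ne_of_gt hx.1
    have hx1 : (1:ℝ) - x ≠ 0 := by
      have := hx.2
      have : x < 1/2 := lt_trans this hδ1half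
      intro h; linarith [this]
    have hb : HasDerivAt binEnt ((Real.log (1-x) - Real.log x) / Real.log 2) x := by
      have h1 : HasDerivAt Real.negMulLog (-Real.log x - 1) x := Real.hasDerivAt_negMulLog hx0
      have h2 : HasDerivAt (fun p : ℝ => Real.negMulLog (1 - p))
          (-(-Real.log (1-x) - 1)) x := by
        have h3 := (Real.hasDerivAt_negMulLog (x := 1 - x) hx1).comp x
          ((hasDerivAt_id x).const_sub 1)
        exact h3.congr_deriv (by ring)
      have h4 := (h1.add h2).div_const (Real.log 2)
      have heq : binEnt = fun p => (Real.negMulLog p + Real.negMulLog (1 - p)) / Real.log 2 :=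
        funext binEnt_eq
      rw [heq]
      exact h4.congr_deriv (by ring)
    have hg : HasDerivAt (fun δ : ℝ => (d:ℝ) * δ + k) d x := by
      simpa using ((hasDerivAt_id x).const_mul (d:ℝ)).add_const k
    have hgne : (d:ℝ) * x + k ≠ 0 := by
      have := hx.1
      positivity
    have hdiv := hb.div hg hgne
    have hnum : N x = ((Real.log (1-x) - Real.log x) / Real.log 2) * ((d:ℝ) * x + k)
        - binEnt x * d := by
      simp only [hN, binEnt, Real.logb]
      field_simp
      ring
    rw [hf]
    exact hdiv.congr_deriv (by rw [hnum])
  have hδ11 : δ1 < 1 := by linarith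
  have hmono : StrictMonoOn f (Set.Icc (0:ℝ) δ1) := by
    apply strictMonoOn_of_deriv_pos (convex_Icc _ _)
    · exact hfc.mono (Set.Icc_subset_Icc le_rfl hδ11.le)
    · intro x hx
      rw [interior_Icc] at hx
      rw [(hderiv x hx).deriv]
      apply div_pos _ (by have := hx.1; positivity)
      have := hNanti x δ1 hx.1 hx.2.le hδ11
      linarith
  have hδe_mem : δe ∈ Set.Icc (0:ℝ) δ1 := ⟨hδe0.le, hδ1gt.le⟩
  have hδ1_mem : δ1 ∈ Set.Icc (0:ℝ) δ1 := ⟨by linarith, le_rfl⟩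
  have hsup1 : sSup (f '' Set.Icc (0:ℝ) δe) = f δe := by
    apply IsGreatest.csSup_eq
    constructor
    · exact Set.mem_image_of_mem f ⟨hδe0.le, le_rfl⟩
    · rintro y ⟨x, hx, rfl⟩
      exact hmono.monotoneOn ⟨hx.1, le_trans hx.2 hδ1gt.le⟩ hδe_mem hx.2
  have hlt : f δe < f δ1 := hmono hδe_mem hδ1_mem hδ1gt
  have hbdd : BddAbove (f '' Set.Icc (0:ℝ) 1) :=
    (isCompact_Icc.image_of_continuousOn hfc).bddAbove
  have hle : f δ1 ≤ sSup (f '' Set.Icc (0:ℝ) 1) :=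
    le_csSup hbdd (Set.mem_image_of_mem f ⟨by linarith, hδ11.le⟩)
  calc sSup (f '' Set.Icc (0:ℝ) δe) = f δe := hsup1
    _ < f δ1 := hlt
    _ ≤ sSup (f '' Set.Icc (0:ℝ) 1) := hle
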